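/- arXiv:1708.06080 — 2 statements merged into one kernel-verified Lean document; each statement's English description precedes it below -/
import Mathlib

section
/- For every v ∈ (0,1] and every x ∈ ℕ₀, the scale function satisfies the harmonic recursion W_v(x) = v · Σ_{k=0}^{x+1} p_k · W_v(x+1−k). -/
open MeasureTheory Set
open scoped ENNReal

noncomputable section

namespace RW

/-- Probability generating function of `p`. -/
def ptilde (p : ℕ → ℝ) (z : ℝ) : ℝ := ∑' k : ℕ, p k * z ^ k

variable {Ω : Type*} [MeasurableSpace Ω]

/-- The upwards skip-free random walk started at `x` (driven by the claims `C`). -/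
def walk (C : ℕ → Ω → ℕ) (x : ℤ) (n : ℕ) (ω : Ω) : ℤ :=
  x + n - ∑ i ∈ Finset.range n, (C i ω : ℤ)

/-- First passage time (weakly) below `b`, `= ⊤` if it never happens. -/
def tauMinus (C : ℕ → Ω → ℕ) (x b : ℤ) (ω : Ω) : ℕ∞ :=
  sInf ((fun n : ℕ => (n : ℕ∞)) '' {n : ℕ | walk C x n ω ≤ b})

/-- First passage time (weakly) above `b`, `= ⊤` if it never happens. -/
def tauPlus (C : ℕ → Ω → ℕ) (x b : ℤ) (ω : Ω) : ℕ∞ :=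
  sInf ((fun n : ℕ => (n : ℕ∞)) '' {n : ℕ | b ≤ walk C x n ω})

/-- `E[f ; A]`, the expectation of `f` on the event `A`. -/
def Eind (P : Measure Ω) (A : Set Ω) (f : Ω → ℝ) : ℝ := ∫ ω, A.indicator f ω ∂P

/-- The first scale function `W_v`. -/
def W (P : Measure Ω) (C : ℕ → Ω → ℕ) (v p0 : ℝ) (y : ℤ) : ℝ :=
  if 0 ≤ y then
    1 / (p0 * Eind P {ω | tauPlus C 0 y ω < tauMinus C 0 (-1) ω}
          fun ω => v ^ (tauPlus C 0 y ω).toNat)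
  else 0

/-- The joint transform of the ruin time and the deficit at ruin. -/
def Psi (P : Measure Ω) (C : ℕ → Ω → ℕ) (v w : ℝ) (x : ℤ) : ℝ :=
  Eind P {ω | tauMinus C x (-1) ω < ⊤}
    fun ω => v ^ (tauMinus C x (-1) ω).toNat *
      w ^ (-(walk C x (tauMinus C x (-1) ω).toNat ω))

/-- The second scale function `Z_v(·, w)` (normalized so that `Z_v(0,w) = 1`). -/
def Z (P : Measure Ω) (C : ℕ → Ω → ℕ) (v w p0 : ℝ) (x : ℤ) : ℝ :=
  Psi P C v w x + p0 * (1 - Psi P C v w 0) * W P C v p0 x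

/-- Cumulative capital injections of the walk reflected at `0`. -/
def Rstar (C : ℕ → Ω → ℕ) (x : ℤ) (n : ℕ) (ω : Ω) : ℤ :=
  max 0 (-(Finset.range (n + 1)).inf' Finset.nonempty_range_add_one fun m => walk C x m ω)

/-- First entrance time of the walk reflected at `0` into `[b, ∞)`. -/
def tauTildePlus (C : ℕ → Ω → ℕ) (x b : ℤ) (ω : Ω) : ℕ∞ :=
  sInf ((fun n : ℕ => (n : ℕ∞)) '' {n : ℕ | b ≤ walk C x n ω + Rstar C x n ω})

/-- Cumulative dividends under the barrier policy at `b`. -/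
def Rdiv (C : ℕ → Ω → ℕ) (x b : ℤ) (n : ℕ) (ω : Ω) : ℤ :=
  max 0 ((Finset.range (n + 1)).sup' Finset.nonempty_range_add_one fun m => walk C x m ω - b)

/-- Single-period dividends under the barrier policy at `b`. -/
def rdiv (C : ℕ → Ω → ℕ) (x b : ℤ) (n : ℕ) (ω : Ω) : ℤ :=
  Rdiv C x b n ω - if n = 0 then 0 else Rdiv C x b (n - 1) ω

/-- Ruin time of the walk reflected at the barrier `b`. -/
def Truin (C : ℕ → Ω → ℕ) (x b : ℤ) (ω : Ω) : ℕ∞ :=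
  sInf ((fun n : ℕ => (n : ℕ∞)) '' {n : ℕ | walk C x n ω - Rdiv C x b n ω ≤ -1})

lemma walk_stronglyMeasurable (C : ℕ → Ω → ℕ) (hC : ∀ i, Measurable (C i)) (x : ℤ) (n : ℕ) :
    StronglyMeasurable (walk C x n) := by
  have h : Measurable fun ω => ∑ i ∈ Finset.range n, (C i ω : ℤ) :=
    Finset.measurable_sum _ fun i _ => (measurable_from_top.comp (hC i))
  exact (measurable_const.sub h).stronglyMeasurable


/-!
Let `G(x, y) = E_x[v^{τ_y^+}; τ_y^+ < τ_{-1}^-]`, so that `W_v(y) = 1 / (p₀ G(0, y))`.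
Since the walk moves up by at most one step at a time, it cannot reach `z` without passing
through every level `y ∈ [x, z]`, and the Markov property gives `G(x, z) = G(x, y) G(y, z)`.
Conditioning on the first claim gives `G(x, x + 1) = v Σ_k p_k G(x + 1 - k, x + 1)`, where
`G(j, ·) = 0` for `j < 0`. Writing `G(j, x + 1) = G(0, x + 1) / G(0, j)` and dividing by
`G(0, x + 1)` (note `G(0, y) ≥ (v p₀)^y > 0`) turns this into the recursion for `W_v`.

Both identities are proved for the exit probabilities `P_x(τ_y^+ = n < τ_{-1}^-)`, which
satisfy an explicit recursion in `n` (again by conditioning on the first claim, which is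
independent of the later ones); multiplicativity of `G` is then a convolution identity.
-/

def skipFreePath (x : ℤ) (c : ℕ → ℕ) (n : ℕ) : ℤ := x + n - ∑ i ∈ Finset.range n, (c i : ℤ)

def ExitsUpwardAt (x y : ℤ) (n : ℕ) (c : ℕ → ℕ) : Prop :=
  y ≤ skipFreePath x c n ∧ ∀ m < n, 0 ≤ skipFreePath x c m ∧ skipFreePath x c m < y

section ExitsUpwardAt

variable {x y : ℤ} {n : ℕ} {c : ℕ → ℕ}

lemma skipFreePath_zero : skipFreePath x c 0 = x := by
  simp [skipFreePath]

lemma skipFreePath_succ :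
    skipFreePath x c (n + 1) = skipFreePath (x + 1 - c 0) (fun i => c (i + 1)) n := by
  simp only [skipFreePath, Finset.sum_range_succ']
  push_cast
  ring

lemma exitsUpwardAt_zero_iff : ExitsUpwardAt x y 0 c ↔ y ≤ x := by
  simp [ExitsUpwardAt, skipFreePath_zero]

lemma exitsUpwardAt_succ_iff :
    ExitsUpwardAt x y (n + 1) c ↔
      (0 ≤ x ∧ x < y) ∧ ExitsUpwardAt (x + 1 - c 0) y n (fun i => c (i + 1)) := by
  simp only [ExitsUpwardAt, Nat.forall_lt_succ_left, skipFreePath_zero, skipFreePath_succ]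
  tauto

lemma ExitsUpwardAt.unique {n' : ℕ} (h : ExitsUpwardAt x y n c)
    (h' : ExitsUpwardAt x y n' c) : n = n' := by
  by_contra hne
  rcases Nat.lt_or_gt_of_ne hne with hlt | hlt
  · exact (h'.2 n hlt).2.not_ge h.1
  · exact (h.2 n' hlt).2.not_ge h'.1

end ExitsUpwardAt

/-- The probability that the walk started at `x`, with claims of law `q`, exits `[0, y)`
upward exactly at time `n` (see `measure_exitsUpwardAt`). -/
def exitProb (q : ℕ → ℝ≥0∞) (x y : ℤ) : ℕ → ℝ≥0∞
  | 0 => if y ≤ x then 1 else 0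
  | n + 1 => if 0 ≤ x ∧ x < y then ∑' k : ℕ, q k * exitProb q (x + 1 - k) y n else 0

section exitProb

variable {q : ℕ → ℝ≥0∞} {x y z : ℤ} {n : ℕ}

lemma exitProb_zero : exitProb q x y 0 = if y ≤ x then 1 else 0 := rfl

lemma exitProb_succ_of_lt (hx : 0 ≤ x) (hxy : x < y) :
    exitProb q x y (n + 1) = ∑' k : ℕ, q k * exitProb q (x + 1 - k) y n := by
  simp [exitProb, hx, hxy]

lemma exitProb_succ_eq_zero (h : ¬ (0 ≤ x ∧ x < y)) : exitProb q x y (n + 1) = 0 := by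
  simp [exitProb, h]

lemma exitProb_eq_zero_of_neg (hx : x < 0) (hy : 0 ≤ y) : exitProb q x y n = 0 := by
  cases n with
  | zero => simp [exitProb_zero, show ¬ y ≤ x by omega]
  | succ n => exact exitProb_succ_eq_zero (by omega)

lemma exitProb_ne_zero (hq : q 0 ≠ 0) (n : ℕ) (hx : 0 ≤ x) (hn : x + n = y) :
    exitProb q x y n ≠ 0 := by
  induction n generalizing x with
  | zero => simp [exitProb_zero, show y ≤ x by omega]
  | succ n ih =>
    rw [exitProb_succ_of_lt hx (by omega)]
    refine ne_of_gt (lt_of_lt_of_le ?_ (ENNReal.le_tsum 0))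
    simpa [pos_iff_ne_zero, hq] using ih (x := x + 1) (by omega) (by push_cast at hn; omega)

lemma exitProb_eq_sum_mul (hxy : x ≤ y) (hyz : y ≤ z) (n : ℕ) :
    exitProb q x z n = ∑ m ∈ Finset.range (n + 1), exitProb q x y m * exitProb q y z (n - m) := by
  induction n generalizing x with
  | zero =>
    simp only [zero_add, Finset.sum_range_one, Nat.sub_zero, exitProb_zero]
    split_ifs <;> simp <;> omega
  | succ n ih =>
    rw [Finset.sum_range_succ']
    simp only [Nat.succ_sub_succ, Nat.sub_zero]
    rcases hxy.lt_or_eq with hxy | rfl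
    swap
    · simp [exitProb_succ_eq_zero, exitProb_zero]
    rw [exitProb_zero, if_neg (by omega), zero_mul, add_zero]
    by_cases hx : 0 ≤ x
    swap
    · simp [exitProb_succ_eq_zero, hx]
    calc exitProb q x z (n + 1)
        = ∑' k : ℕ, ∑ m ∈ Finset.range (n + 1),
            q k * exitProb q (x + 1 - k) y m * exitProb q y z (n - m) := by
          rw [exitProb_succ_of_lt hx (hxy.trans_le hyz)]
          refine tsum_congr fun k => ?_
          rw [ih (by omega), Finset.mul_sum]
          simp only [mul_assoc]
      _ = ∑ m ∈ Finset.range (n + 1), exitProb q x y (m + 1) * exitProb q y z (n - m) := by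
          rw [Summable.tsum_finsetSum fun _ _ => ENNReal.summable]
          refine Finset.sum_congr rfl fun m _ => ?_
          rw [exitProb_succ_of_lt hx hxy, ENNReal.tsum_mul_right]

end exitProb

theorem _root_.ENNReal.tsum_mul_tsum_eq_tsum_sum_range (f g : ℕ → ℝ≥0∞) :
    (∑' n, f n) * ∑' n, g n = ∑' n, ∑ k ∈ Finset.range (n + 1), f k * g (n - k) := by
  calc (∑' n, f n) * ∑' n, g n = ∑' k, ∑' l, f k * g l := by
        rw [← ENNReal.tsum_mul_right]
        exact tsum_congr fun _ => ENNReal.tsum_mul_left.symm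
    _ = ∑' p : ℕ × ℕ, f p.1 * g p.2 := ENNReal.tsum_prod.symm
    _ = ∑' n, ∑ kl ∈ Finset.HasAntidiagonal.antidiagonal n, f kl.1 * g kl.2 := by
        rw [← Finset.HasAntidiagonal.sigmaAntidiagonalEquivProd.tsum_eq, ENNReal.tsum_sigma']
        exact tsum_congr fun n => Finset.tsum_subtype _ fun kl : ℕ × ℕ => f kl.1 * g kl.2
    _ = _ := by simp_rw [Finset.Nat.sum_antidiagonal_eq_sum_range_succ fun k l => f k * g l]

def exitTransform (q : ℕ → ℝ≥0∞) (V : ℝ≥0∞) (x y : ℤ) : ℝ≥0∞ :=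
  ∑' n : ℕ, V ^ n * exitProb q x y n

section exitTransform

variable {q : ℕ → ℝ≥0∞} {V : ℝ≥0∞} {x y z : ℤ}

lemma exitTransform_eq_zero_of_neg (hx : x < 0) (hy : 0 ≤ y) : exitTransform q V x y = 0 := by
  simp [exitTransform, exitProb_eq_zero_of_neg hx hy]

lemma exitTransform_eq_tsum (hx : 0 ≤ x) (hxy : x < y) :
    exitTransform q V x y = V * ∑' k : ℕ, q k * exitTransform q V (x + 1 - k) y := by
  rw [exitTransform, tsum_eq_zero_add' ENNReal.summable, exitProb_zero, if_neg hxy.not_ge,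
    mul_zero, zero_add]
  simp_rw [exitProb_succ_of_lt hx hxy, exitTransform, ← ENNReal.tsum_mul_left]
  rw [ENNReal.tsum_comm]
  exact tsum_congr fun k => tsum_congr fun n => by ring

lemma exitTransform_eq_sum (x : ℕ) (hxy : x < y) :
    exitTransform q V x y =
      V * ∑ k ∈ Finset.range (x + 2), q k * exitTransform q V (x + 1 - k) y := by
  rw [exitTransform_eq_tsum (by omega) hxy, tsum_eq_sum]
  intro k hk
  rw [Finset.mem_range, not_lt] at hk
  rw [exitTransform_eq_zero_of_neg (by omega) (by omega), mul_zero]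

lemma exitTransform_mul (hxy : x ≤ y) (hyz : y ≤ z) :
    exitTransform q V x y * exitTransform q V y z = exitTransform q V x z := by
  rw [exitTransform, exitTransform, ENNReal.tsum_mul_tsum_eq_tsum_sum_range]
  refine tsum_congr fun n => ?_
  rw [exitProb_eq_sum_mul hxy hyz n, Finset.mul_sum]
  refine Finset.sum_congr rfl fun m hm => ?_
  obtain ⟨j, rfl⟩ := Nat.exists_eq_add_of_le (Finset.mem_range_succ_iff.mp hm)
  rw [Nat.add_sub_cancel_left, pow_add]
  ring

lemma exitTransform_eq_mul_inv (hy : 0 ≤ y) (hyz : y ≤ z) (h0 : exitTransform q V 0 y ≠ 0)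
    (htop : exitTransform q V 0 y ≠ ⊤) :
    exitTransform q V y z = exitTransform q V 0 z * (exitTransform q V 0 y)⁻¹ := by
  rw [← exitTransform_mul hy hyz, mul_comm (exitTransform q V 0 y), mul_assoc,
    ENNReal.mul_inv_cancel h0 htop, mul_one]

lemma exitTransform_ne_zero (hV : V ≠ 0) (hq : q 0 ≠ 0) (hx : 0 ≤ x) (hxy : x ≤ y) :
    exitTransform q V x y ≠ 0 := by
  have hn := exitProb_ne_zero (y := y) hq (y - x).toNat hx (by omega)
  rw [exitTransform, Ne, ENNReal.tsum_eq_zero, not_forall]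
  exact ⟨_, mul_ne_zero (pow_ne_zero _ hV) hn⟩

lemma exitTransform_le_one (hV : V ≤ 1) (h : ∑' n, exitProb q x y n ≤ 1) :
    exitTransform q V x y ≤ 1 :=
  (ENNReal.tsum_le_tsum fun _ => mul_le_of_le_one_left' (pow_le_one' hV _)).trans h

lemma inv_exitTransform_eq_sum (hV : V ≠ 0) (hq : q 0 ≠ 0)
    (htop : ∀ y, exitTransform q V 0 y ≠ ⊤) (x : ℕ) :
    (exitTransform q V 0 x)⁻¹ =
      V * ∑ k ∈ Finset.range (x + 2), q k * (exitTransform q V 0 (x + 1 - k))⁻¹ := by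
  have h0 : ∀ y : ℤ, 0 ≤ y → exitTransform q V 0 y ≠ 0 := fun y hy =>
    exitTransform_ne_zero hV hq le_rfl hy
  have hquot : ∀ k ∈ Finset.range (x + 2), exitTransform q V (x + 1 - k) (x + 1) =
      exitTransform q V 0 (x + 1) * (exitTransform q V 0 (x + 1 - k))⁻¹ := fun k hk => by
    rw [Finset.mem_range] at hk
    exact exitTransform_eq_mul_inv (by omega) (by omega) (h0 _ (by omega)) (htop _)
  have hsplit : exitTransform q V 0 (x + 1) * 1 = exitTransform q V 0 (x + 1) *
      ((V * ∑ k ∈ Finset.range (x + 2), q k * (exitTransform q V 0 (x + 1 - k))⁻¹) *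
        exitTransform q V 0 x) := by
    calc exitTransform q V 0 (x + 1) * 1
        = exitTransform q V 0 x * exitTransform q V x (x + 1) := by
          rw [mul_one, exitTransform_mul (by omega) (by omega)]
      _ = _ := by
          rw [exitTransform_eq_sum x (by omega), Finset.sum_congr rfl fun k hk => by
            rw [hquot k hk]]
          simp only [Finset.mul_sum, Finset.sum_mul]
          exact Finset.sum_congr rfl fun _ _ => by ring
  exact (ENNReal.eq_inv_of_mul_eq_one_left
    ((ENNReal.mul_right_inj (h0 _ (by omega)) (htop _)).mp hsplit).symm).symm

end exitTransform

lemma measurableSet_exitsUpwardAt {α : Type*} {m : MeasurableSpace α} {c : ℕ → α → ℕ}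
    (hc : ∀ i, Measurable (c i)) (x y : ℤ) (n : ℕ) :
    MeasurableSet {a | ExitsUpwardAt x y n (fun i => c i a)} := by
  have hpath : ∀ j, Measurable fun a => skipFreePath x (fun i => c i a) j := fun j =>
    measurable_const.sub (Finset.measurable_sum _ fun i _ => measurable_from_top.comp (hc i))
  simp only [ExitsUpwardAt, Set.ofPred_and, Set.ofPred_forall]
  exact (measurableSet_le measurable_const (hpath n)).inter <| .iInter fun j => .iInter fun _ =>
    (measurableSet_le measurable_const (hpath j)).inter (measurableSet_lt (hpath j) measurable_const)

section Probability

open ProbabilityTheory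

lemma measure_inter_eq_mul_of_measurableSet_tail {P : Measure Ω} {C : ℕ → Ω → ℕ}
    (hC : ∀ i, Measurable (C i)) (hindep : iIndepFun C P) (k : ℕ) {B : Set Ω}
    (hB : MeasurableSet[⨆ j ∈ Set.Ioi 0, MeasurableSpace.comap (C j) inferInstance] B) :
    P ({ω | C 0 ω = k} ∩ B) = P {ω | C 0 ω = k} * P B := by
  have hind := indep_iSup_of_disjoint (fun i => (hC i).comap_le) hindep.iIndep
    (S := {0}) (T := Set.Ioi 0) (by simp)
  refine (Indep_iff _ _ _).1 hind _ _ ?_ hB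
  exact le_iSup₂ (f := fun j (_ : j ∈ ({0} : Set ℕ)) =>
    MeasurableSpace.comap (C j) inferInstance) 0 rfl _ ⟨{k}, trivial, rfl⟩

variable {P : Measure Ω} [IsProbabilityMeasure P] {p : ℕ → ℝ} {C : ℕ → Ω → ℕ}

theorem measure_exitsUpwardAt (hC : ∀ i, Measurable (C i)) (hindep : iIndepFun C P)
    (hdist : ∀ i k, P {ω | C i ω = k} = ENNReal.ofReal (p k)) (x y : ℤ) (n : ℕ) :
    P {ω | ExitsUpwardAt x y n (fun i => C i ω)} =
      exitProb (fun k => ENNReal.ofReal (p k)) x y n := by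
  induction n generalizing C x with
  | zero => by_cases h : y ≤ x <;> simp [exitsUpwardAt_zero_iff, exitProb_zero, h]
  | succ n ih =>
    by_cases h : 0 ≤ x ∧ x < y
    swap
    · simp [exitsUpwardAt_succ_iff, h, exitProb_succ_eq_zero h]
    have hshift := ih (C := fun i => C (i + 1)) (fun i => hC _)
      (hindep.precomp (add_left_injective 1)) (fun i => hdist _)
    have hevent : {ω | ExitsUpwardAt x y (n + 1) (fun i => C i ω)} = ⋃ k : ℕ,
        {ω | C 0 ω = k} ∩ {ω | ExitsUpwardAt (x + 1 - k) y n (fun i => C (i + 1) ω)} := by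
      ext ω
      simp [exitsUpwardAt_succ_iff, h]
    have htail : ∀ i, Measurable[⨆ j ∈ Set.Ioi 0, MeasurableSpace.comap (C j) inferInstance]
        (C (i + 1)) := fun i =>
      measurable_iff_comap_le.2 <| le_iSup₂ (f := fun j (_ : j ∈ Set.Ioi 0) =>
        MeasurableSpace.comap (C j) inferInstance) (i + 1) (Nat.succ_pos i)
    rw [exitProb_succ_of_lt h.1 h.2, hevent, measure_iUnion]
    · refine tsum_congr fun k => ?_
      rw [measure_inter_eq_mul_of_measurableSet_tail hC hindep k
        (measurableSet_exitsUpwardAt htail _ y n), hdist, hshift]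
    · exact fun k l hkl => Set.disjoint_left.2 fun ω h1 h2 => hkl (h1.1.symm.trans h2.1)
    · exact fun k => ((hC 0) (measurableSet_singleton k)).inter
        (measurableSet_exitsUpwardAt (fun i => hC _) _ y n)

lemma exitTransform_ne_top (hC : ∀ i, Measurable (C i)) (hindep : iIndepFun C P)
    (hdist : ∀ i k, P {ω | C i ω = k} = ENNReal.ofReal (p k)) {v : ℝ} (hv : v ≤ 1) (x y : ℤ) :
    exitTransform (fun k => ENNReal.ofReal (p k)) (ENNReal.ofReal v) x y ≠ ⊤ := by
  refine ne_top_of_le_ne_top ENNReal.one_ne_top (exitTransform_le_one (ENNReal.ofReal_le_one.2 hv) ?_)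
  simp_rw [← measure_exitsUpwardAt hC hindep hdist x y]
  rw [← measure_iUnion (fun n n' hne => Set.disjoint_left.2 fun ω h h' => hne (h.unique h'))
    (fun n => measurableSet_exitsUpwardAt hC x y n)]
  exact prob_le_one

end Probability

lemma natCast_lt_sInf_image_iff {s : Set ℕ} {n : ℕ} :
    (n : ℕ∞) < sInf ((↑) '' s) ↔ ∀ m ∈ s, n < m := by
  rw [← ENat.add_one_le_iff (ENat.natCast_ne_top n), le_sInf_iff, Set.forall_mem_image]
  exact forall₂_congr fun m _ => by norm_cast

lemma sInf_image_natCast_eq {s : Set ℕ} {n : ℕ} (hn : n ∈ s) (hmin : ∀ m < n, m ∉ s) :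
    sInf ((↑) '' s : Set ℕ∞) = n :=
  IsLeast.csInf_eq ⟨⟨n, hn, rfl⟩, by
    rintro _ ⟨m, hm, rfl⟩
    exact_mod_cast not_lt.1 fun h => hmin m h hm⟩

section PassageTimes

variable {α : Type*} {C : ℕ → α → ℕ} {x y : ℤ} {ω : α}

lemma walk_eq_skipFreePath (n : ℕ) : walk C x n ω = skipFreePath x (fun i => C i ω) n := rfl

lemma tauPlus_eq_of_exitsUpwardAt {n : ℕ} (h : ExitsUpwardAt x y n (fun i => C i ω)) :
    tauPlus C x y ω = n :=
  sInf_image_natCast_eq h.1 fun m hm hm' => (h.2 m hm).2.not_ge hm'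

lemma tauPlus_lt_tauMinus_iff (hy : 0 ≤ y) :
    tauPlus C x y ω < tauMinus C x (-1) ω ↔ ∃ n, ExitsUpwardAt x y n (fun i => C i ω) := by
  constructor
  · intro h
    have hne : {n | y ≤ walk C x n ω}.Nonempty := by
      by_contra he
      simp [tauPlus, Set.not_nonempty_iff_eq_empty.mp he] at h
    set n := sInf {n | y ≤ walk C x n ω}
    have hbelow : ∀ m < n, walk C x m ω < y := fun m hm => not_le.1 (Nat.notMem_of_lt_sInf hm)
    rw [tauPlus, sInf_image_natCast_eq (Nat.sInf_mem hne) fun m hm => (hbelow m hm).not_ge,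
      tauMinus, natCast_lt_sInf_image_iff] at h
    refine ⟨n, Nat.sInf_mem hne, fun m hm => ⟨?_, hbelow m hm⟩⟩
    by_contra hneg
    exact (h m (show walk C x m ω ≤ -1 by rw [walk_eq_skipFreePath]; omega)).not_gt hm
  · rintro ⟨n, hn⟩
    rw [tauPlus_eq_of_exitsUpwardAt hn, tauMinus, natCast_lt_sInf_image_iff]
    intro m hm
    rw [Set.mem_ofPred_eq, walk_eq_skipFreePath] at hm
    by_contra hle
    rcases (not_lt.1 hle).lt_or_eq with hlt | rfl
    · have := (hn.2 m hlt).1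
      omega
    · have := hn.1
      omega

lemma indicator_tauPlus_lt_tauMinus_eq_tsum (hy : 0 ≤ y) (v : ℝ) :
    {ω | tauPlus C x y ω < tauMinus C x (-1) ω}.indicator (fun ω => v ^ (tauPlus C x y ω).toNat) =
      fun ω => ∑' n : ℕ,
        {ω | ExitsUpwardAt x y n (fun i => C i ω)}.indicator (fun _ => v ^ n) ω := by
  ext ω
  by_cases h : ∃ n, ExitsUpwardAt x y n (fun i => C i ω)
  · obtain ⟨n, hn⟩ := h
    rw [Set.indicator_of_mem (show ω ∈ {ω | tauPlus C x y ω < tauMinus C x (-1) ω} from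
        (tauPlus_lt_tauMinus_iff hy).2 ⟨n, hn⟩),
      tsum_eq_single n fun m hm => Set.indicator_of_notMem
        (s := {ω | ExitsUpwardAt x y m fun i => C i ω}) (fun hm' => hm (hm'.unique hn)) _,
      Set.indicator_of_mem (s := {ω | ExitsUpwardAt x y n fun i => C i ω}) hn,
      tauPlus_eq_of_exitsUpwardAt hn, ENat.toNat_natCast]
  · rw [Set.indicator_of_notMem (show ω ∉ {ω | tauPlus C x y ω < tauMinus C x (-1) ω} from
        mt (tauPlus_lt_tauMinus_iff hy).1 h)]
    simp [not_exists.1 h]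

end PassageTimes

open ProbabilityTheory in
theorem eind_eq_toReal_exitTransform {P : Measure Ω} [IsProbabilityMeasure P] {p : ℕ → ℝ}
    {C : ℕ → Ω → ℕ} (hC : ∀ i, Measurable (C i)) (hindep : iIndepFun C P)
    (hdist : ∀ i k, P {ω | C i ω = k} = ENNReal.ofReal (p k))
    {v : ℝ} (hv0 : 0 ≤ v) (hv1 : v ≤ 1) {x y : ℤ} (hy : 0 ≤ y) :
    Eind P {ω | tauPlus C x y ω < tauMinus C x (-1) ω} (fun ω => v ^ (tauPlus C x y ω).toNat) =
      (exitTransform (fun k => ENNReal.ofReal (p k)) (ENNReal.ofReal v) x y).toReal := by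
  have hA := measurableSet_exitsUpwardAt hC x y
  have hfin := exitTransform_ne_top hC hindep hdist hv1 x y
  have hlint : ∀ n : ℕ, ∫⁻ ω, ‖{ω | ExitsUpwardAt x y n (fun i => C i ω)}.indicator
      (fun _ => v ^ n) ω‖ₑ ∂P =
        ENNReal.ofReal v ^ n * exitProb (fun k => ENNReal.ofReal (p k)) x y n := by
    intro n
    simp_rw [enorm_indicator_eq_indicator_enorm]
    rw [lintegral_indicator_const (hA n), Real.enorm_eq_ofReal (by positivity),
      ENNReal.ofReal_pow hv0, measure_exitsUpwardAt hC hindep hdist]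
  rw [Eind, indicator_tauPlus_lt_tauMinus_eq_tsum hy, integral_tsum
    (fun n => (stronglyMeasurable_const.indicator (hA n)).aestronglyMeasurable)
    (by simp_rw [hlint]; exact hfin), exitTransform,
    ENNReal.tsum_toReal_eq fun n => ne_top_of_le_ne_top hfin (ENNReal.le_tsum n)]
  refine tsum_congr fun n => ?_
  rw [integral_indicator_const _ (hA n), smul_eq_mul, measureReal_def,
    measure_exitsUpwardAt hC hindep hdist, ENNReal.toReal_mul, ENNReal.toReal_pow,
    ENNReal.toReal_ofReal hv0, mul_comm]

open ProbabilityTheory in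
lemma W_eq_inv_toReal_exitTransform {P : Measure Ω} [IsProbabilityMeasure P] {p : ℕ → ℝ}
    {C : ℕ → Ω → ℕ} (hC : ∀ i, Measurable (C i)) (hindep : iIndepFun C P)
    (hdist : ∀ i k, P {ω | C i ω = k} = ENNReal.ofReal (p k))
    {v : ℝ} (hv0 : 0 ≤ v) (hv1 : v ≤ 1) {y : ℤ} (hy : 0 ≤ y) :
    W P C v (p 0) y = (p 0)⁻¹ *
      ((exitTransform (fun k => ENNReal.ofReal (p k)) (ENNReal.ofReal v) 0 y)⁻¹).toReal := by
  rw [W, if_pos hy, eind_eq_toReal_exitTransform hC hindep hdist hv0 hv1 hy,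
    ENNReal.toReal_inv, one_div, mul_inv]

theorem W_harmonic_recursion_general
    (P : Measure Ω) [IsProbabilityMeasure P]
    (C : ℕ → Ω → ℕ) (p : ℕ → ℝ)
    (hC : ∀ i, Measurable (C i))
    (hindep : ProbabilityTheory.iIndepFun C P)
    (hdist : ∀ i k, P {ω | C i ω = k} = ENNReal.ofReal (p k))
    (hnn : ∀ k, 0 ≤ p k) (hp0 : 0 < p 0) :
    ∀ v : ℝ, v ∈ Set.Ioc (0 : ℝ) 1 → ∀ x : ℕ,
      W P C v (p 0) x
        = v * ∑ k ∈ Finset.range (x + 2), p k * W P C v (p 0) ((x : ℤ) + 1 - k) := by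
  rintro v ⟨hv0, hv1⟩ x
  have hV : ENNReal.ofReal v ≠ 0 := (ENNReal.ofReal_pos.2 hv0).ne'
  have hq : ENNReal.ofReal (p 0) ≠ 0 := (ENNReal.ofReal_pos.2 hp0).ne'
  have hk : ∀ k ∈ Finset.range (x + 2), (0 : ℤ) ≤ x + 1 - k := fun k hk => by
    rw [Finset.mem_range] at hk
    omega
  rw [W_eq_inv_toReal_exitTransform hC hindep hdist hv0.le hv1 (by positivity),
    inv_exitTransform_eq_sum hV hq (exitTransform_ne_top hC hindep hdist hv1 0) x,
    ENNReal.toReal_mul, ENNReal.toReal_ofReal hv0.le, ENNReal.toReal_sum fun k hkx =>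
      ENNReal.mul_ne_top ENNReal.ofReal_ne_top
        (ENNReal.inv_ne_top.2 (exitTransform_ne_zero hV hq le_rfl (hk k hkx)))]
  simp only [Finset.mul_sum]
  refine Finset.sum_congr rfl fun k hkx => ?_
  rw [W_eq_inv_toReal_exitTransform hC hindep hdist hv0.le hv1 (hk k hkx), ENNReal.toReal_mul,
    ENNReal.toReal_ofReal (hnn k)]
  ring

/-- The harmonic recursion `W_v(x) = v · Σ_(k=0)^(x+1) p_k W_v(x+1-k)` for `x ∈ ℕ₀`. -/
theorem W_harmonic_recursion
    (P : Measure Ω) [IsProbabilityMeasure P]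
    (C : ℕ → Ω → ℕ) (p : ℕ → ℝ)
    (hC : ∀ i, Measurable (C i))
    (hindep : ProbabilityTheory.iIndepFun C P)
    (hdist : ∀ i k, P {ω | C i ω = k} = ENNReal.ofReal (p k))
    (hnn : ∀ k, 0 ≤ p k) (hsum : ∑' k, p k = 1) (hp0 : 0 < p 0) :
    ∀ v : ℝ, v ∈ Set.Ioc (0 : ℝ) 1 → ∀ x : ℕ,
      W P C v (p 0) x
        = v * ∑ k ∈ Finset.range (x + 2), p k * W P C v (p 0) ((x : ℤ) + 1 - k) :=
  W_harmonic_recursion_general P C p hC hindep hdist hnn hp0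

end RW
end
end

section
/- Assume min(p_0 + p_1, v) < 1, and let v ∈ (0,1], b ∈ ℕ₀ and x ∈ ℤ with x ≤ b. Then W_v(b+1) > W_v(b), and the expected discounted dividends until ruin under the barrier policy at b satisfy E_x[Σ_{i=0}^{T−1} v^i r(i)] = W_v(x)/(W_v(b+1) − W_v(b)). -/
/-!
Identify an event about the first `n` claims with the set of words `w ∈ ℕⁿ` it contains: by
independence, `∑ₙ vⁿ P{Q(C₀, …, Cₙ₋₁)}` is the total weight `∑_{Q w} ∏ᵢ v p(wᵢ)` of the words
satisfying `Q`. The two-sided transform `A(s, y) = E_s[v^{τ_y^+}; τ_y^+ < τ_{-1}^-]`, and with it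
`W_v(y) = 1 / (p₀ A(0, y))`, is such a weight sum. Since the walk is upwards skip-free, a first
passage from `a` to `c` splits uniquely at its first visit to `b ∈ [a, c]`, so
`A(a, c) = A(a, b) A(b, c)` and `W_v(y) = A(y, z) W_v(z)`. Likewise, started at `x ≤ b`, a path on
which the reflected walk pays its `(k+2)`-nd unit of dividends at its last step is a first passage
from `x` to `b + 1` followed by a path from `b` paying its `(k+1)`-st unit at its last step. Hence
the expected discounted dividends are `∑ₖ A(x, b+1) A(b, b+1)ᵏ = A(x, b+1) / (1 - A(b, b+1))`,
and `A(b, b+1) < 1` under `min(p₀ + p₁, v) < 1`.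
-/

open MeasureTheory Set
open scoped ENNReal

noncomputable section

namespace RW

variable {Ω : Type*} [MeasurableSpace Ω]

section General

lemma forall_take_iff {α : Type*} {w : List α} {Q : List α → Prop} :
    (∀ m, Q (w.take m)) ↔ ∀ m ≤ w.length, Q (w.take m) := by
  refine ⟨fun h m _ => h m, fun h m => ?_⟩
  rcases le_total m w.length with hm | hm
  · exact h m hm
  · simpa [List.take_of_length_le hm] using h _ le_rfl

theorem tsum_subtype_append_eq_mul {α : Type*} {f : List α → ℝ≥0∞}
    (hf : ∀ u t, f (u ++ t) = f u * f t) {P Q R : List α → Prop}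
    (hP : ∀ u₁ u₂, P u₁ → P u₂ → u₁ <+: u₂ → u₁ = u₂)
    (hR : ∀ w, R w ↔ ∃ u t, P u ∧ Q t ∧ u ++ t = w) :
    ∑' w : {w // R w}, f w = (∑' u : {u // P u}, f u) * ∑' t : {t // Q t}, f t := by
  let e : {u // P u} × {t // Q t} → {w // R w} :=
    fun q => ⟨q.1 ++ q.2, (hR _).2 ⟨_, _, q.1.2, q.2.2, rfl⟩⟩
  have he : e.Bijective := by
    refine ⟨?_, fun ⟨w, hw⟩ => ?_⟩
    · rintro ⟨⟨u₁, hu₁⟩, ⟨t₁, ht₁⟩⟩ ⟨⟨u₂, hu₂⟩, ⟨t₂, ht₂⟩⟩ h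
      have h' : u₁ ++ t₁ = u₂ ++ t₂ := congrArg Subtype.val h
      obtain rfl : u₁ = u₂ :=
        (List.prefix_or_prefix_of_prefix (h' ▸ List.prefix_append u₁ t₁)
          (List.prefix_append u₂ t₂)).elim (hP _ _ hu₁ hu₂) fun h => (hP _ _ hu₂ hu₁ h).symm
      obtain rfl := List.append_cancel_left h'
      rfl
    · obtain ⟨u, t, hu, ht, rfl⟩ := (hR w).1 hw
      exact ⟨(⟨u, hu⟩, ⟨t, ht⟩), rfl⟩
  rw [← (Equiv.ofBijective e he).tsum_eq, ENNReal.tsum_prod', ← ENNReal.tsum_mul_right]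
  simp only [Equiv.ofBijective_apply, e, hf, ENNReal.tsum_mul_left]

lemma natCast_lt_sInf_iff {T : Set ℕ∞} {n : ℕ} :
    (n : ℕ∞) < sInf T ↔ ∀ b ∈ T, (n : ℕ∞) < b := by
  refine ⟨fun h b hb => h.trans_le (sInf_le hb), fun h => ?_⟩
  rcases T.eq_empty_or_nonempty with rfl | hT
  · simp
  · exact h _ (csInf_mem hT)

lemma sInf_eq_natCast_iff {T : Set ℕ∞} {n : ℕ} :
    sInf T = n ↔ (n : ℕ∞) ∈ T ∧ ∀ b ∈ T, (n : ℕ∞) ≤ b := by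
  refine ⟨fun h => ⟨?_, fun b hb => h ▸ sInf_le hb⟩,
    fun h => le_antisymm (sInf_le h.1) (le_sInf h.2)⟩
  rcases T.eq_empty_or_nonempty with rfl | hT
  · simp at h
  · exact h ▸ csInf_mem hT

lemma tsum_ite_eq_and_natCast_lt {M : Type*} [AddCommMonoid M] [TopologicalSpace M] (f : ℕ → M)
    (τ σ : ℕ∞) :
    ∑' n : ℕ, (if τ = n ∧ (n : ℕ∞) < σ then f n else 0) = if τ < σ then f τ.toNat else 0 := by
  induction τ using ENat.recTopCoe with
  | top => simp
  | coe k =>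
    rw [tsum_eq_single k fun n hn => if_neg fun h => hn (by exact_mod_cast h.1.symm)]
    simp

lemma integral_tsum_indicator_pow (μ : Measure Ω) {E : ℕ → Set Ω}
    (hE : ∀ n, MeasurableSet (E n)) {v : ℝ} (hv : 0 ≤ v)
    (hfin : ∑' n, ENNReal.ofReal v ^ n * μ (E n) ≠ ⊤) :
    ∫ ω, ∑' n, (E n).indicator (fun _ => v ^ n) ω ∂μ =
      (∑' n, ENNReal.ofReal v ^ n * μ (E n)).toReal := by
  set g : Ω → ℝ≥0∞ := fun ω => ∑' n, (E n).indicator (fun _ => ENNReal.ofReal v ^ n) ω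
  have hg : Measurable g := Measurable.tsum fun n => measurable_const.indicator (hE n)
  have hlint : ∫⁻ ω, g ω ∂μ = ∑' n, ENNReal.ofReal v ^ n * μ (E n) := by
    rw [lintegral_tsum fun n => (measurable_const.indicator (hE n)).aemeasurable]
    simp_rw [lintegral_indicator_const (hE _)]
  have hpt : ∀ ω, ∑' n, (E n).indicator (fun _ => v ^ n) ω = (g ω).toReal := by
    intro ω
    rw [ENNReal.tsum_toReal_eq fun n => by by_cases hω : ω ∈ E n <;> simp [hω]]
    refine tsum_congr fun n => ?_
    by_cases hω : ω ∈ E n <;> simp [hω, ENNReal.toReal_pow, hv]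
  simp_rw [hpt]
  rw [integral_toReal hg.aemeasurable (ae_lt_top hg (hlint ▸ hfin)), hlint]

end General

section Words

def level (s : ℤ) (w : List ℕ) : ℤ := s + w.length - w.sum

@[simp] lemma level_nil (s : ℤ) : level s [] = s := by simp [level]

lemma level_append (s : ℤ) (u t : List ℕ) : level s (u ++ t) = level (level s u) t := by
  simp only [level, List.length_append, List.sum_append]
  push_cast
  ring

lemma level_add (s d : ℤ) (w : List ℕ) : level (s + d) w = level s w + d := by
  simp only [level]
  ring

lemma level_take_succ_le (s : ℤ) (w : List ℕ) (m : ℕ) :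
    level s (w.take (m + 1)) ≤ level s (w.take m) + 1 := by
  rw [List.take_add_one, level_append]
  cases w[m]? <;> simp [level]

lemma level_le_level_dropLast_add_one (s : ℤ) (w : List ℕ) :
    level s w ≤ level s w.dropLast + 1 := by
  rcases Nat.eq_zero_or_pos w.length with hw | hw
  · simp [List.eq_nil_of_length_eq_zero hw]
  · simpa [List.dropLast_eq_take, Nat.sub_add_cancel hw] using
      level_take_succ_le s w (w.length - 1)

lemma exists_take_level_eq {s y : ℤ} (hsy : s ≤ y) {w : List ℕ} {n : ℕ}
    (hn : y ≤ level s (w.take n)) :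
    ∃ m, level s (w.take m) = y ∧ ∀ j < m, level s (w.take j) < y := by
  classical
  have hex : ∃ m, y ≤ level s (w.take m) := ⟨n, hn⟩
  refine ⟨Nat.find hex, ?_, fun j hj => lt_of_not_ge (Nat.find_min hex hj)⟩
  have hspec := Nat.find_spec hex
  rcases hm : Nat.find hex with _ | l
  · rw [hm] at hspec
    simp only [List.take_zero, level_nil] at hspec ⊢
    omega
  · have hl := Nat.find_min hex (show l < Nat.find hex by omega)
    rw [hm] at hspec
    have := level_take_succ_le s w l
    omega

/-- `w` realises the event `τ_y^+ = |w| < τ_{-1}^-` for the walk started at `s`. -/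
def IsFirstPassage (s y : ℤ) (w : List ℕ) : Prop :=
  (∀ m < w.length, 0 ≤ level s (w.take m) ∧ level s (w.take m) < y) ∧ level s w = y

namespace IsFirstPassage

variable {s y : ℤ} {u w : List ℕ}

lemma nonneg (hw : IsFirstPassage s y w) (hsy : s ≠ y) : 0 ≤ s := by
  rcases w with _ | ⟨c, t⟩
  · exact absurd hw.2 (by simpa using hsy)
  · simpa using (hw.1 0 (by simp)).1

lemma level_take_le (hw : IsFirstPassage s y w) (m : ℕ) : level s (w.take m) ≤ y := by
  rcases lt_or_ge m w.length with hm | hm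
  · exact (hw.1 m hm).2.le
  · rw [List.take_of_length_le hm, hw.2]

lemma eq_of_prefix (hu : IsFirstPassage s y u) (hw : IsFirstPassage s y w) (h : u <+: w) :
    u = w := by
  refine h.eq_of_length (le_antisymm h.length_le (not_lt.1 fun hlt => ?_))
  have := (hw.1 _ hlt).2
  rw [← List.prefix_iff_eq_take.1 h, hu.2] at this
  exact lt_irrefl _ this

end IsFirstPassage

lemma isFirstPassage_iff_exists_append {a b c : ℤ} (hab : a ≤ b) (hbc : b ≤ c) {w : List ℕ} :
    IsFirstPassage a c w ↔
      ∃ u t, IsFirstPassage a b u ∧ IsFirstPassage b c t ∧ u ++ t = w := by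
  constructor
  · intro hw
    obtain ⟨m, hm, hmin⟩ := exists_take_level_eq hab (n := w.length)
      (by rw [List.take_length, hw.2]; exact hbc)
    have hlevel : ∀ j, level b ((w.drop m).take j) = level a (w.take (m + j)) := fun j => by
      rw [List.take_add, level_append, hm]
    refine ⟨w.take m, w.drop m, ⟨fun j hj => ?_, hm⟩, ⟨fun j hj => ?_, ?_⟩,
      List.take_append_drop m w⟩
    · rw [List.length_take] at hj
      rw [List.take_take, min_eq_left (by omega)]
      exact ⟨(hw.1 j (by omega)).1, hmin j (by omega)⟩
    · rw [hlevel]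
      exact hw.1 _ (by rw [List.length_drop] at hj; omega)
    · rw [← List.take_length (l := w.drop m), hlevel, List.length_drop,
        List.take_of_length_le (by omega), hw.2]
  · rintro ⟨u, t, hu, ht, rfl⟩
    refine ⟨fun m hm => ?_, by rw [level_append, hu.2, ht.2]⟩
    rcases lt_or_ge m u.length with h | h
    · rw [List.take_append_of_le_length h.le]
      have := hu.1 m h
      omega
    · obtain ⟨j, rfl⟩ := Nat.exists_eq_add_of_le h
      rw [List.take_length_add_append, level_append, hu.2]
      exact ht.1 j (by rw [List.length_append] at hm; omega)

/-- With `r = discountedPMF v p` this is `E_s[v^{τ_y^+}; τ_y^+ < τ_{-1}^-]`, see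
`IsIIDWithPMF.Eind_eq_passage`. -/
def passage (r : ℕ → ℝ≥0∞) (s y : ℤ) : ℝ≥0∞ :=
  ∑' w : {w // IsFirstPassage s y w}, (w.1.map r).prod

lemma passage_trans (r : ℕ → ℝ≥0∞) {a b c : ℤ} (hab : a ≤ b) (hbc : b ≤ c) :
    passage r a c = passage r a b * passage r b c :=
  tsum_subtype_append_eq_mul (f := fun w => (w.map r).prod) (by simp [List.prod_append])
    (fun _ _ => IsFirstPassage.eq_of_prefix) fun _ => isFirstPassage_iff_exists_append hab hbc

lemma passage_ne_zero {r : ℕ → ℝ≥0∞} (hr : r 0 ≠ 0) {s y : ℤ} (h0 : 0 ≤ s) (hsy : s ≤ y) :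
    passage r s y ≠ 0 := by
  have hw : IsFirstPassage s y (List.replicate (y - s).toNat 0) := by
    refine ⟨fun m hm => ?_, by simp [level]; omega⟩
    simp only [List.length_replicate] at hm
    simp [level, List.take_replicate]
    omega
  intro h
  simpa [hr] using ENNReal.tsum_eq_zero.1 h ⟨_, hw⟩

lemma passage_eq_zero_of_neg (r : ℕ → ℝ≥0∞) {s y : ℤ} (hs : s < 0) (hsy : s ≠ y) :
    passage r s y = 0 :=
  ENNReal.tsum_eq_zero.2 fun w => absurd (w.2.nonneg hsy) hs.not_ge

end Words

section Dividends

variable {s β : ℤ} {u t w : List ℕ}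

/-- The cumulative dividends `R(|w|)` of the barrier strategy at `β`, for the walk started at `s`
with claims `w`. -/
def dividends (s β : ℤ) (w : List ℕ) : ℤ :=
  max 0 ((Finset.range (w.length + 1)).sup' Finset.nonempty_range_add_one
    fun m => level s (w.take m) - β)

lemma dividends_le_iff {d : ℤ} :
    dividends s β w ≤ d ↔ 0 ≤ d ∧ ∀ m, level s (w.take m) - β ≤ d := by
  rw [dividends, max_le_iff, Finset.sup'_le_iff,
    forall_take_iff (Q := fun u => level s u - β ≤ d)]
  simp only [Finset.mem_range, Nat.lt_succ_iff]

lemma dividends_nonneg : 0 ≤ dividends s β w := (dividends_le_iff.1 le_rfl).1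

lemma level_sub_le_dividends (h : u <+: w) : level s u - β ≤ dividends s β w := by
  rw [List.prefix_iff_eq_take.1 h]
  exact (dividends_le_iff.1 le_rfl).2 _

@[simp] lemma dividends_nil : dividends s β [] = max 0 (s - β) := by simp [dividends]

lemma dividends_le_of_prefix (h : u <+: w) : dividends s β u ≤ dividends s β w :=
  dividends_le_iff.2
    ⟨dividends_nonneg, fun m => level_sub_le_dividends ((u.take_prefix m).trans h)⟩

lemma take_prefix_dropLast {m : ℕ} (hm : m < w.length) : w.take m <+: w.dropLast := by
  rw [List.dropLast_eq_take]
  exact List.prefix_take_iff.2 ⟨w.take_prefix m, by simp; omega⟩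

lemma dividends_eq_max_dropLast :
    dividends s β w = max (dividends s β w.dropLast) (level s w - β) := by
  refine le_antisymm (dividends_le_iff.2 ⟨le_max_of_le_left dividends_nonneg, fun m => ?_⟩)
    (max_le (dividends_le_of_prefix w.dropLast_prefix)
      (level_sub_le_dividends (List.prefix_refl w)))
  rcases lt_or_ge m w.length with hm | hm
  · exact le_max_of_le_left (level_sub_le_dividends (take_prefix_dropLast hm))
  · rw [List.take_of_length_le hm]
    exact le_max_right _ _

lemma dividends_le_dropLast_add_one : dividends s β w ≤ dividends s β w.dropLast + 1 := by
  rw [dividends_eq_max_dropLast]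
  have := level_le_level_dropLast_add_one s w
  have := level_sub_le_dividends (s := s) (β := β) (List.prefix_refl w.dropLast)
  omega

/-- `|w| < T`: the walk reflected at `β` has not been ruined. -/
def Survives (s β : ℤ) (w : List ℕ) : Prop :=
  ∀ m, dividends s β (w.take m) ≤ level s (w.take m)

/-- Along `w` the reflected walk survives and pays its `(k+1)`-st unit of dividends at the last
step. -/
def PaysLast (s β : ℤ) (k : ℕ) (w : List ℕ) : Prop :=
  Survives s β w ∧ dividends s β w = k + 1 ∧ dividends s β w.dropLast = k

namespace IsFirstPassage

lemma dividends_take_eq_zero (hu : IsFirstPassage s (β + 1) u) {m : ℕ} (hm : m < u.length) :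
    dividends s β (u.take m) = 0 := by
  refine le_antisymm (dividends_le_iff.2 ⟨le_rfl, fun j => ?_⟩) dividends_nonneg
  rw [List.take_take]
  have := (hu.1 (min j m) (by omega)).2
  omega

lemma dividends_eq_one (hu : IsFirstPassage s (β + 1) u) : dividends s β u = 1 := by
  refine le_antisymm (dividends_le_iff.2 ⟨zero_le_one, fun m => ?_⟩) ?_
  · have := hu.level_take_le m
    omega
  · have := level_sub_le_dividends (s := s) (β := β) (List.prefix_refl u)
    rw [hu.2] at this
    omega

lemma level_append (hu : IsFirstPassage s (β + 1) u) (t : List ℕ) :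
    level s (u ++ t) = level β t + 1 := by
  rw [RW.level_append, hu.2, level_add]

lemma dividends_append (hu : IsFirstPassage s (β + 1) u) (t : List ℕ) :
    dividends s β (u ++ t) = dividends β β t + 1 := by
  have hu1 := level_sub_le_dividends (s := s) (β := β) (List.prefix_append u t)
  have ht0 := dividends_nonneg (s := β) (β := β) (w := t)
  rw [hu.2] at hu1
  refine le_antisymm (dividends_le_iff.2 ⟨by omega, fun m => ?_⟩) ?_
  · rcases le_or_gt m u.length with hm | hm
    · rw [List.take_append_of_le_length hm]
      have := hu.level_take_le m
      omega
    · obtain ⟨j, rfl⟩ := Nat.exists_eq_add_of_le hm.le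
      rw [List.take_length_add_append, hu.level_append]
      linarith [level_sub_le_dividends (s := β) (β := β) (t.take_prefix j)]
  · suffices dividends β β t ≤ dividends s β (u ++ t) - 1 by omega
    refine dividends_le_iff.2 ⟨by omega, fun j => ?_⟩
    have := level_sub_le_dividends (s := s) (β := β) ((u ++ t).take_prefix (u.length + j))
    rw [List.take_length_add_append, hu.level_append] at this
    omega

lemma survives_append_iff (hu : IsFirstPassage s (β + 1) u) :
    Survives s β (u ++ t) ↔ Survives β β t := by
  constructor
  · intro h j
    have := h (u.length + j)
    rw [List.take_length_add_append, hu.dividends_append, hu.level_append] at this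
    omega
  · intro h m
    rcases lt_or_ge m u.length with hm | hm
    · rw [List.take_append_of_le_length hm.le, hu.dividends_take_eq_zero hm]
      exact (hu.1 m hm).1
    · obtain ⟨j, rfl⟩ := Nat.exists_eq_add_of_le hm
      rw [List.take_length_add_append, hu.dividends_append, hu.level_append]
      linarith [h j]

lemma paysLast_append_iff (hu : IsFirstPassage s (β + 1) u) {k : ℕ} :
    PaysLast s β (k + 1) (u ++ t) ↔ PaysLast β β k t := by
  have hne : ∀ {n : ℕ}, dividends β β t = n + 1 → t ≠ [] := by
    rintro n h rfl
    simp at h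
    omega
  rw [PaysLast, PaysLast, hu.survives_append_iff, hu.dividends_append]
  constructor
  · rintro ⟨hsurv, h1, h0⟩
    have ht := hne (n := k) (by push_cast at h1; omega)
    rw [List.dropLast_append_of_ne_nil ht, hu.dividends_append] at h0
    exact ⟨hsurv, by push_cast at h1; omega, by push_cast at h0; omega⟩
  · rintro ⟨hsurv, h1, h0⟩
    rw [List.dropLast_append_of_ne_nil (hne h1), hu.dividends_append]
    exact ⟨hsurv, by push_cast; omega, by omega⟩

end IsFirstPassage

lemma paysLast_zero_iff (hs : s ≤ β) : PaysLast s β 0 w ↔ IsFirstPassage s (β + 1) w := by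
  constructor
  · rintro ⟨hsurv, h1, h0⟩
    refine ⟨fun m hm => ?_, ?_⟩
    · have := level_sub_le_dividends (s := s) (β := β) (take_prefix_dropLast hm)
      have := hsurv m
      have := dividends_nonneg (s := s) (β := β) (w := w.take m)
      omega
    · have := dividends_eq_max_dropLast (s := s) (β := β) (w := w)
      omega
  · intro hw
    have hβ : 0 ≤ β := by linarith [hw.nonneg (by omega)]
    have hne : w ≠ [] := by
      rintro rfl
      have := hw.2
      simp at this
      omega
    refine ⟨?_, by simp [hw.dividends_eq_one], ?_⟩
    · simpa using (hw.survives_append_iff (t := [])).2 fun m => by simpa using hβ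
    · rw [List.dropLast_eq_take]
      exact hw.dividends_take_eq_zero (by have := List.length_pos_of_ne_nil hne; omega)

lemma paysLast_succ_iff (hs : s ≤ β) {k : ℕ} :
    PaysLast s β (k + 1) w ↔
      ∃ u t, IsFirstPassage s (β + 1) u ∧ PaysLast β β k t ∧ u ++ t = w := by
  constructor
  · intro hw
    obtain ⟨n, hn⟩ : ∃ n, β + 1 ≤ level s (w.take n) := by
      by_contra! h
      have := dividends_le_iff.2 ⟨le_rfl, fun m => by linarith [h m]⟩
      have := hw.2.1
      omega
    obtain ⟨m, hm, hmin⟩ := exists_take_level_eq (by omega) hn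
    have hu : IsFirstPassage s (β + 1) (w.take m) := by
      refine ⟨fun j hj => ?_, hm⟩
      rw [List.length_take] at hj
      rw [List.take_take, min_eq_left (by omega)]
      have := hw.1 j
      have := dividends_nonneg (s := s) (β := β) (w := w.take j)
      exact ⟨by omega, hmin j (by omega)⟩
    refine ⟨_, _, hu, ?_, List.take_append_drop m w⟩
    rw [← hu.paysLast_append_iff, List.take_append_drop]
    exact hw
  · rintro ⟨u, t, hu, ht, rfl⟩
    exact hu.paysLast_append_iff.2 ht

lemma tsum_paysLast (r : ℕ → ℝ≥0∞) (hs : s ≤ β) (k : ℕ) :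
    ∑' w : {w // PaysLast s β k w}, (w.1.map r).prod =
      passage r s (β + 1) * passage r β (β + 1) ^ k := by
  induction k generalizing s with
  | zero =>
    simpa [passage] using (Equiv.subtypeEquivRight fun w => paysLast_zero_iff hs).tsum_eq
      fun w : {w // IsFirstPassage s (β + 1) w} => (w.1.map r).prod
  | succ k ih =>
    rw [tsum_subtype_append_eq_mul (f := fun w => (w.map r).prod) (by simp [List.prod_append])
      (fun _ _ => IsFirstPassage.eq_of_prefix) fun _ => paysLast_succ_iff hs, ih le_rfl,
      ← passage, pow_succ]
    ring

end Dividends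

section Claims

variable {Ω : Type*}

def claimList (C : ℕ → Ω → ℕ) (n : ℕ) (ω : Ω) : List ℕ := List.ofFn fun j : Fin n => C j ω

variable (C : ℕ → Ω → ℕ) {ω : Ω}

@[simp] lemma length_claimList (n : ℕ) : (claimList C n ω).length = n := List.length_ofFn

lemma take_claimList {m n : ℕ} (h : m ≤ n) : (claimList C n ω).take m = claimList C m ω := by
  apply List.ext_getElem <;> simp [claimList]
  omega

lemma claimList_prefix {m n : ℕ} (h : m ≤ n) : claimList C m ω <+: claimList C n ω :=
  take_claimList C h ▸ List.take_prefix _ _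

lemma dropLast_claimList (n : ℕ) : (claimList C (n + 1) ω).dropLast = claimList C n ω := by
  rw [List.dropLast_eq_take, length_claimList, Nat.add_sub_cancel, take_claimList C n.le_succ]

lemma walk_eq_level (x : ℤ) (n : ℕ) : walk C x n ω = level x (claimList C n ω) := by
  simp [walk, level, claimList, List.sum_ofFn, Finset.sum_range]

lemma walk_succ (x : ℤ) (n : ℕ) : walk C x (n + 1) ω = walk C x n ω + 1 - C n ω := by
  simp only [walk, Finset.sum_range_succ]
  push_cast
  ring

lemma walk_le_of_two_le_claims {n : ℕ} (hω : ∀ j < n, 2 ≤ C j ω) (x : ℤ) {m : ℕ}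
    (hm : m ≤ n) : walk C x m ω ≤ x - m := by
  induction m with
  | zero => simp [walk]
  | succ l ih =>
    rw [walk_succ]
    have := hω l hm
    push_cast
    linarith [ih (by omega), (show (2 : ℤ) ≤ C l ω by exact_mod_cast this)]

lemma Rdiv_eq_dividends (x β : ℤ) (n : ℕ) :
    Rdiv C x β n ω = dividends x β (claimList C n ω) := by
  rw [Rdiv, dividends]
  congr 1
  refine Finset.sup'_congr _ (by simp) fun m hm => ?_
  rw [take_claimList C (by simp at hm; omega), walk_eq_level]

lemma isFirstPassage_claimList_iff {s y : ℤ} {n : ℕ} :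
    IsFirstPassage s y (claimList C n ω) ↔
      (∀ m < n, 0 ≤ walk C s m ω ∧ walk C s m ω < y) ∧ walk C s n ω = y := by
  simp only [IsFirstPassage, length_claimList, walk_eq_level]
  exact and_congr_left' (forall₂_congr fun m hm => by rw [take_claimList C hm.le])

lemma not_isFirstPassage_of_two_le_claims {b n : ℕ} (hω : ∀ j < b + 1, 2 ≤ C j ω) :
    ¬IsFirstPassage b (b + 1) (claimList C n ω) := by
  rw [isFirstPassage_claimList_iff]
  rintro ⟨hlt, hn⟩
  rcases le_or_gt n (b + 1) with hnb | hnb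
  · linarith [walk_le_of_two_le_claims C hω b hnb]
  · have := walk_le_of_two_le_claims C hω b le_rfl
    push_cast at this
    linarith [(hlt (b + 1) hnb).1]

lemma tauPlus_eq_iff {s y : ℤ} {n : ℕ} :
    tauPlus C s y ω = n ↔ y ≤ walk C s n ω ∧ ∀ m < n, walk C s m ω < y := by
  rw [tauPlus, sInf_eq_natCast_iff, Set.forall_mem_image, Nat.cast_injective.mem_set_image]
  simp only [Set.mem_ofPred_eq, Nat.cast_le]
  exact and_congr_right' (forall_congr' fun m => by omega)

lemma natCast_lt_tauMinus_iff {s c : ℤ} {n : ℕ} :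
    (n : ℕ∞) < tauMinus C s c ω ↔ ∀ m ≤ n, c < walk C s m ω := by
  simp only [tauMinus, natCast_lt_sInf_iff, Set.forall_mem_image, Set.mem_ofPred_eq,
    Nat.cast_lt]
  exact forall_congr' fun m => by omega

lemma tauPlus_eq_and_lt_tauMinus_iff {s y : ℤ} (h0 : 0 ≤ s) (hsy : s ≤ y) {n : ℕ} :
    tauPlus C s y ω = n ∧ (n : ℕ∞) < tauMinus C s (-1) ω ↔
      IsFirstPassage s y (claimList C n ω) := by
  rw [tauPlus_eq_iff, natCast_lt_tauMinus_iff, isFirstPassage_claimList_iff]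
  constructor
  · rintro ⟨⟨hy, hlt⟩, hpos⟩
    refine ⟨fun m hm => ⟨by linarith [hpos m hm.le], hlt m hm⟩, le_antisymm ?_ hy⟩
    rcases n with _ | l
    · simpa [walk] using hsy
    · rw [walk_succ]
      linarith [hlt l l.lt_succ_self]
  · rintro ⟨hlt, hy⟩
    refine ⟨⟨hy.ge, fun m hm => (hlt m hm).2⟩, fun m hm => ?_⟩
    rcases hm.lt_or_eq with hm | rfl
    · linarith [(hlt m hm).1]
    · omega

lemma natCast_lt_Truin_iff {x β : ℤ} {n : ℕ} :
    (n : ℕ∞) < Truin C x β ω ↔ Survives x β (claimList C n ω) := by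
  simp only [Truin, natCast_lt_sInf_iff, Set.forall_mem_image, Set.mem_ofPred_eq, Nat.cast_lt,
    Survives, forall_take_iff (Q := fun u => dividends x β u ≤ level x u), length_claimList]
  refine forall_congr' fun m => ?_
  by_cases hm : m ≤ n
  · rw [take_claimList C hm, ← walk_eq_level, ← Rdiv_eq_dividends]
    omega
  · simp [hm]
    omega

lemma rdiv_eq_sub {x β : ℤ} (hx : x ≤ β) (n : ℕ) :
    rdiv C x β n ω =
      dividends x β (claimList C n ω) - dividends x β (claimList C n ω).dropLast := by
  rcases n with _ | n
  · simp [rdiv, Rdiv_eq_dividends, claimList]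
    omega
  · rw [rdiv, if_neg n.succ_ne_zero, Nat.add_sub_cancel, Rdiv_eq_dividends, Rdiv_eq_dividends,
      dropLast_claimList]

lemma rdiv_mem_Icc {x β : ℤ} (hx : x ≤ β) (n : ℕ) : rdiv C x β n ω ∈ Set.Icc 0 1 := by
  rw [rdiv_eq_sub C hx, Set.mem_Icc, sub_nonneg, sub_le_iff_le_add']
  exact ⟨dividends_le_of_prefix (List.dropLast_prefix _), dividends_le_dropLast_add_one⟩

lemma lt_Truin_and_rdiv_eq_one_iff {x β : ℤ} (hx : x ≤ β) {n : ℕ} :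
    (n : ℕ∞) < Truin C x β ω ∧ rdiv C x β n ω = 1 ↔ ∃ k, PaysLast x β k (claimList C n ω) := by
  rw [natCast_lt_Truin_iff, rdiv_eq_sub C hx]
  constructor
  · rintro ⟨hsurv, h⟩
    have := dividends_nonneg (s := x) (β := β) (w := (claimList C n ω).dropLast)
    exact ⟨_, hsurv, by omega, (Int.toNat_of_nonneg this).symm⟩
  · rintro ⟨k, hsurv, h1, h0⟩
    exact ⟨hsurv, by omega⟩

lemma ite_lt_Truin_eq_indicator {x β : ℤ} (hx : x ≤ β) (v : ℝ) (n : ℕ) :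
    (if (n : ℕ∞) < Truin C x β ω then v ^ n * (rdiv C x β n ω : ℝ) else 0) =
      {ω | ∃ k, PaysLast x β k (claimList C n ω)}.indicator (fun _ => v ^ n) ω := by
  classical
  have h01 := rdiv_mem_Icc C (ω := ω) hx n
  simp only [Set.indicator_apply, Set.mem_ofPred_eq, ← lt_Truin_and_rdiv_eq_one_iff C hx]
  by_cases hT : (n : ℕ∞) < Truin C x β ω
  · rcases (show rdiv C x β n ω = 0 ∨ rdiv C x β n ω = 1 by simp at h01; omega) with h0 | h1
    · simp [hT, h0]
    · simp [hT, h1]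
  · simp [hT]

lemma setOf_claimList_eq_iInter (w : List ℕ) :
    {ω | claimList C w.length ω = w} = ⋂ j ∈ Finset.range w.length, C j ⁻¹' {w.getD j 0} := by
  ext ω
  simp only [Set.mem_ofPred_eq, Set.mem_iInter, Finset.mem_range, Set.mem_preimage,
    Set.mem_singleton_iff, List.ext_getElem_iff, claimList, List.length_ofFn, List.getElem_ofFn,
    true_and]
  exact forall_congr' fun j => ⟨fun h hj => by rw [h hj hj, List.getD_eq_getElem _ _ hj],
    fun h hj _ => by rw [h hj, List.getD_eq_getElem _ _ hj]⟩

lemma setOf_claimList_eq_of_length_ne {w : List ℕ} {n : ℕ} (hn : w.length ≠ n) :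
    {ω | claimList C n ω = w} = ∅ :=
  Set.eq_empty_of_forall_notMem fun ω hω => hn (by rw [← hω.out]; simp)

lemma setOf_claimList_eq_iUnion (Q : List ℕ → Prop) (n : ℕ) :
    {ω | Q (claimList C n ω)} = ⋃ w : {w // Q w}, {ω | claimList C n ω = w} := by
  ext ω
  simp only [Set.mem_ofPred_eq, Set.mem_iUnion, Subtype.exists, exists_prop, exists_eq_right']

open Function in
lemma pairwise_disjoint_isFirstPassage (s y : ℤ) :
    Pairwise (Disjoint on fun n => {ω | IsFirstPassage s y (claimList C n ω)}) := by
  intro n m hnm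
  refine Set.disjoint_left.2 fun ω hn hm => hnm ?_
  rcases le_total n m with hle | hle
  · simpa using congrArg List.length (hn.eq_of_prefix hm (claimList_prefix C hle))
  · simpa using (congrArg List.length (hm.eq_of_prefix hn (claimList_prefix C hle))).symm

end Claims

section Measure

variable {P : Measure Ω} {C : ℕ → Ω → ℕ} {p : ℕ → ℝ}

structure IsIIDWithPMF (P : Measure Ω) (C : ℕ → Ω → ℕ) (p : ℕ → ℝ) : Prop where
  measurable : ∀ i, Measurable (C i)
  iIndepFun : ProbabilityTheory.iIndepFun C P
  measure_eq : ∀ i k, P {ω | C i ω = k} = ENNReal.ofReal (p k)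

def discountedPMF (v : ℝ) (p : ℕ → ℝ) : ℕ → ℝ≥0∞ :=
  fun c => ENNReal.ofReal v * ENNReal.ofReal (p c)

lemma measurableSet_claimList_eq (hC : ∀ i, Measurable (C i)) (n : ℕ) (w : List ℕ) :
    MeasurableSet {ω | claimList C n ω = w} := by
  by_cases hn : w.length = n
  · subst hn
    rw [setOf_claimList_eq_iInter]
    exact .biInter (Set.to_countable _) fun j _ => hC j (measurableSet_singleton _)
  · rw [setOf_claimList_eq_of_length_ne C hn]
    exact .empty

lemma measurableSet_claimList (hC : ∀ i, Measurable (C i)) (Q : List ℕ → Prop) (n : ℕ) :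
    MeasurableSet {ω | Q (claimList C n ω)} := by
  rw [setOf_claimList_eq_iUnion]
  exact .iUnion fun w => measurableSet_claimList_eq hC n w

namespace IsIIDWithPMF

lemma measure_claimList_eq (h : IsIIDWithPMF P C p) (w : List ℕ) :
    P {ω | claimList C w.length ω = w} = (w.map fun c => ENNReal.ofReal (p c)).prod := by
  rw [setOf_claimList_eq_iInter, h.iIndepFun.measure_inter_preimage_eq_mul _
    fun j _ => measurableSet_singleton _, Finset.prod_range]
  simp only [Set.preimage, Set.mem_singleton_iff, h.measure_eq,
    List.getD_eq_getElem _ _ (Fin.is_lt _)]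
  exact Fin.prod_univ_fun_getElem w fun c => ENNReal.ofReal (p c)

lemma tsum_pow_mul_measure_claimList (h : IsIIDWithPMF P C p) (v : ℝ) (Q : List ℕ → Prop) :
    ∑' n, ENNReal.ofReal v ^ n * P {ω | Q (claimList C n ω)} =
      ∑' w : {w // Q w}, (w.1.map (discountedPMF v p)).prod := by
  have hmeas : ∀ n, P {ω | Q (claimList C n ω)} =
      ∑' w : {w // Q w}, P {ω | claimList C n ω = w} := fun n => by
    rw [setOf_claimList_eq_iUnion]
    refine measure_iUnion (fun w₁ w₂ hne => ?_) fun w =>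
      measurableSet_claimList_eq h.measurable n w.1
    exact Set.disjoint_left.2 fun ω h₁ h₂ => hne (Subtype.ext (h₁.symm.trans h₂))
  simp_rw [hmeas, ← ENNReal.tsum_mul_left]
  rw [ENNReal.tsum_comm]
  refine tsum_congr fun w => ?_
  rw [tsum_eq_single w.1.length fun n hn => ?_, h.measure_claimList_eq]
  · unfold discountedPMF
    rw [List.prod_map_mul, List.map_const', List.prod_replicate]
  · rw [setOf_claimList_eq_of_length_ne C (Ne.symm hn), measure_empty, mul_zero]

lemma passage_le_one [IsProbabilityMeasure P] (h : IsIIDWithPMF P C p) {v : ℝ} (hv : v ≤ 1)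
    (s y : ℤ) : passage (discountedPMF v p) s y ≤ 1 := by
  rw [passage, ← h.tsum_pow_mul_measure_claimList]
  calc ∑' n, ENNReal.ofReal v ^ n * P {ω | IsFirstPassage s y (claimList C n ω)}
      ≤ ∑' n, P {ω | IsFirstPassage s y (claimList C n ω)} :=
        ENNReal.tsum_le_tsum fun n => mul_le_of_le_one_left'
          (pow_le_one₀ (by positivity) (ENNReal.ofReal_le_one.2 hv))
    _ ≤ 1 := (tsum_meas_le_meas_iUnion_of_disjoint P
        (fun n => measurableSet_claimList h.measurable _ n)
        (pairwise_disjoint_isFirstPassage C s y)).trans prob_le_one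

lemma passage_toReal_pos [IsProbabilityMeasure P] (h : IsIIDWithPMF P C p) {v : ℝ}
    (hv0 : 0 < v) (hv1 : v ≤ 1) (hp0 : 0 < p 0) {s y : ℤ} (h0 : 0 ≤ s) (hsy : s ≤ y) :
    0 < (passage (discountedPMF v p) s y).toReal :=
  ENNReal.toReal_pos (passage_ne_zero (by simp [discountedPMF, hv0, hp0]) h0 hsy)
    ((h.passage_le_one hv1 s y).trans_lt ENNReal.one_lt_top).ne

lemma measure_two_le_claims_pos [IsProbabilityMeasure P] (h : IsIIDWithPMF P C p)
    (hnn : ∀ k, 0 ≤ p k) (hp : p 0 + p 1 < 1) (n : ℕ) :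
    0 < P (⋂ j ∈ Finset.range n, C j ⁻¹' {k | 2 ≤ k}) := by
  rw [h.iIndepFun.measure_inter_preimage_eq_mul _ fun _ _ => MeasurableSet.of_discrete,
    pos_iff_ne_zero, Finset.prod_ne_zero_iff]
  intro j _
  have hcompl : {k : ℕ | 2 ≤ k} = (↑({0, 1} : Finset ℕ))ᶜ := by
    ext k
    simp only [Set.mem_ofPred_eq, Finset.coe_insert, Finset.coe_singleton, Set.mem_compl_iff,
      Set.mem_insert_iff, Set.mem_singleton_iff]
    omega
  have h01 : P (C j ⁻¹' ↑({0, 1} : Finset ℕ)) = ENNReal.ofReal (p 0 + p 1) := by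
    rw [← sum_measure_preimage_singleton _ fun _ _ => h.measurable j (measurableSet_singleton _),
      Finset.sum_pair zero_ne_one, ENNReal.ofReal_add (hnn 0) (hnn 1)]
    exact congrArg₂ (· + ·) (h.measure_eq j 0) (h.measure_eq j 1)
  rw [hcompl, Set.preimage_compl, prob_compl_eq_one_sub (h.measurable j (Finset.measurableSet _)),
    h01, ← pos_iff_ne_zero, tsub_pos_iff_lt]
  exact ENNReal.ofReal_lt_one.2 hp

lemma passage_lt_one [IsProbabilityMeasure P] (h : IsIIDWithPMF P C p) (hnn : ∀ k, 0 ≤ p k)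
    {v : ℝ} (hv : v ≤ 1) (hdeg : min (p 0 + p 1) v < 1) (b : ℕ) :
    passage (discountedPMF v p) b (b + 1) < 1 := by
  set E : ℕ → Set Ω := fun n => {ω | IsFirstPassage b (b + 1) (claimList C n ω)}
  have hE : ∀ n, MeasurableSet (E n) := fun n => measurableSet_claimList h.measurable _ n
  have hU : ∑' n, P (E n) = P (⋃ n, E n) :=
    (measure_iUnion (pairwise_disjoint_isFirstPassage C _ _) hE).symm
  rw [passage, ← h.tsum_pow_mul_measure_claimList]
  rcases min_lt_iff.1 hdeg with hp | hv1
  · -- with positive probability the first `b + 1` claims are all at least `2`, and then the walk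
    -- drops below `0` before it can reach `b + 1`
    set D := ⋂ j ∈ Finset.range (b + 1), C j ⁻¹' {k | 2 ≤ k}
    have hDE : Disjoint (⋃ n, E n) D := Set.disjoint_left.2 fun ω hω hD => by
      obtain ⟨n, hn⟩ := Set.mem_iUnion.1 hω
      exact not_isFirstPassage_of_two_le_claims C
        (fun j hj => Set.mem_iInter₂.1 hD j (Finset.mem_range.2 hj)) hn
    have hD : MeasurableSet D :=
      .biInter (Set.to_countable _) fun j _ => h.measurable j MeasurableSet.of_discrete
    calc ∑' n, ENNReal.ofReal v ^ n * P (E n)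
        ≤ ∑' n, P (E n) := ENNReal.tsum_le_tsum fun n => mul_le_of_le_one_left'
          (pow_le_one₀ (by positivity) (ENNReal.ofReal_le_one.2 hv))
      _ ≤ 1 - P D := hU ▸ ENNReal.le_sub_of_add_le_right (measure_ne_top P D)
          ((measure_union hDE hD).symm.trans_le prob_le_one)
      _ < 1 := ENNReal.sub_lt_self ENNReal.one_ne_top one_ne_zero
          (h.measure_two_le_claims_pos hnn hp (b + 1)).ne'
  · -- the walk needs at least one step, which is discounted by `v < 1`
    have hE0 : E 0 = ∅ := Set.eq_empty_of_forall_notMem fun ω hω => by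
      simp [E, claimList, IsFirstPassage] at hω
    calc ∑' n, ENNReal.ofReal v ^ n * P (E n)
        ≤ ∑' n, ENNReal.ofReal v * P (E n) := ENNReal.tsum_le_tsum fun n => by
          rcases n with _ | n
          · simp [hE0]
          · exact mul_le_mul_left (pow_le_of_le_one (by positivity)
              (ENNReal.ofReal_le_one.2 hv) n.succ_ne_zero) _
      _ ≤ ENNReal.ofReal v * 1 := by
          rw [ENNReal.tsum_mul_left, hU]
          gcongr
          exact prob_le_one
      _ < 1 := by simpa using ENNReal.ofReal_lt_one.2 hv1

lemma Eind_eq_passage [IsProbabilityMeasure P] (h : IsIIDWithPMF P C p) {v : ℝ} (hv0 : 0 ≤ v)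
    (hv1 : v ≤ 1) {s y : ℤ} (h0 : 0 ≤ s) (hsy : s ≤ y) :
    Eind P {ω | tauPlus C s y ω < tauMinus C s (-1) ω} (fun ω => v ^ (tauPlus C s y ω).toNat) =
      (passage (discountedPMF v p) s y).toReal := by
  have hpt : ∀ ω, {ω | tauPlus C s y ω < tauMinus C s (-1) ω}.indicator
      (fun ω => v ^ (tauPlus C s y ω).toNat) ω =
        ∑' n, {ω | IsFirstPassage s y (claimList C n ω)}.indicator (fun _ => v ^ n) ω := by
    intro ω
    simp only [Set.indicator_apply, Set.mem_ofPred_eq,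
      ← tauPlus_eq_and_lt_tauMinus_iff C h0 hsy]
    exact (tsum_ite_eq_and_natCast_lt _ _ _).symm
  have hsum := h.tsum_pow_mul_measure_claimList v (IsFirstPassage s y)
  rw [← passage] at hsum
  rw [Eind, funext hpt, integral_tsum_indicator_pow P
    (fun n => measurableSet_claimList h.measurable _ n) hv0
    (hsum ▸ ((h.passage_le_one hv1 s y).trans_lt ENNReal.one_lt_top).ne), hsum]

lemma integral_discounted_dividends [IsProbabilityMeasure P] (h : IsIIDWithPMF P C p) {v : ℝ}
    (hv0 : 0 ≤ v) (hv1 : v ≤ 1) {x β : ℤ} (hx : x ≤ β)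
    (hq : passage (discountedPMF v p) β (β + 1) < 1) :
    ∫ ω, (∑' i : ℕ, if (i : ℕ∞) < Truin C x β ω then v ^ i * (rdiv C x β i ω : ℝ) else 0) ∂P =
      (passage (discountedPMF v p) x (β + 1)).toReal /
        (1 - (passage (discountedPMF v p) β (β + 1)).toReal) := by
  set r := discountedPMF v p
  have hsum : ∑' n, ENNReal.ofReal v ^ n * P {ω | ∃ k, PaysLast x β k (claimList C n ω)} =
      passage r x (β + 1) * (1 - passage r β (β + 1))⁻¹ := by
    rw [h.tsum_pow_mul_measure_claimList v fun w => ∃ k, PaysLast x β k w]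
    have hsplit := ENNReal.tsum_biUnion (f := fun w => (w.map r).prod)
      (t := fun k => {w | PaysLast x β k w}) fun k _ k' _ hne => Set.disjoint_left.2
        fun w hk hk' => hne (by have := hk.2.1; have := hk'.2.1; omega)
    rw [← Set.ofPred_exists] at hsplit
    refine hsplit.trans ?_
    simp_rw [← ENNReal.tsum_geometric, ← ENNReal.tsum_mul_left]
    exact tsum_congr fun k => tsum_paysLast r hx k
  have hfin : passage r x (β + 1) * (1 - passage r β (β + 1))⁻¹ ≠ ⊤ :=
    ENNReal.mul_ne_top ((h.passage_le_one hv1 _ _).trans_lt ENNReal.one_lt_top).ne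
      (ENNReal.inv_ne_top.2 (tsub_pos_of_lt hq).ne')
  simp_rw [ite_lt_Truin_eq_indicator C hx]
  rw [integral_tsum_indicator_pow P (E := fun n => {ω | ∃ k, PaysLast x β k (claimList C n ω)})
    (fun n => measurableSet_claimList h.measurable (fun w => ∃ k, PaysLast x β k w) n) hv0
    (hsum ▸ hfin), hsum,
    ENNReal.toReal_mul, ENNReal.toReal_inv, ENNReal.toReal_sub_of_le hq.le ENNReal.one_ne_top,
    ENNReal.toReal_one, div_eq_mul_inv]

lemma W_eq [IsProbabilityMeasure P] (h : IsIIDWithPMF P C p) {v : ℝ} (hv0 : 0 ≤ v) (hv1 : v ≤ 1)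
    {y : ℤ} (hy : 0 ≤ y) :
    W P C v (p 0) y = 1 / (p 0 * (passage (discountedPMF v p) 0 y).toReal) := by
  rw [W, if_pos hy, h.Eind_eq_passage hv0 hv1 le_rfl hy]

lemma W_pos [IsProbabilityMeasure P] (h : IsIIDWithPMF P C p) {v : ℝ} (hv0 : 0 < v) (hv1 : v ≤ 1)
    (hp0 : 0 < p 0) {y : ℤ} (hy : 0 ≤ y) : 0 < W P C v (p 0) y := by
  rw [h.W_eq hv0.le hv1 hy]
  have := h.passage_toReal_pos hv0 hv1 hp0 le_rfl hy
  positivity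

lemma W_eq_passage_mul_W [IsProbabilityMeasure P] (h : IsIIDWithPMF P C p) {v : ℝ} (hv0 : 0 < v)
    (hv1 : v ≤ 1) (hp0 : 0 < p 0) {y z : ℤ} (hy : 0 ≤ y) (hyz : y ≤ z) :
    W P C v (p 0) y = (passage (discountedPMF v p) y z).toReal * W P C v (p 0) z := by
  rw [h.W_eq hv0.le hv1 hy, h.W_eq hv0.le hv1 (hy.trans hyz), passage_trans _ hy hyz,
    ENNReal.toReal_mul]
  have := h.passage_toReal_pos hv0 hv1 hp0 le_rfl hy
  have := h.passage_toReal_pos hv0 hv1 hp0 hy hyz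
  field_simp

end IsIIDWithPMF

end Measure

theorem deFinetti_barrier_value_general
    (P : Measure Ω) [IsProbabilityMeasure P]
    (C : ℕ → Ω → ℕ) (p : ℕ → ℝ)
    (hC : ∀ i, Measurable (C i))
    (hindep : ProbabilityTheory.iIndepFun C P)
    (hdist : ∀ i k, P {ω | C i ω = k} = ENNReal.ofReal (p k))
    (hnn : ∀ k, 0 ≤ p k) (hp0 : 0 < p 0)
    (v : ℝ) (hv : v ∈ Set.Ioc (0 : ℝ) 1) (hdeg : min (p 0 + p 1) v < 1)
    (b : ℕ) (x : ℤ) (hx : x ≤ (b : ℤ)) :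
    W P C v (p 0) b < W P C v (p 0) ((b : ℤ) + 1) ∧
    ∫ ω, (∑' i : ℕ, if (i : ℕ∞) < Truin C x b ω then v ^ i * (rdiv C x b i ω : ℝ) else 0) ∂P
      = W P C v (p 0) x / (W P C v (p 0) ((b : ℤ) + 1) - W P C v (p 0) b) := by
  obtain ⟨hv0, hv1⟩ := hv
  have h : IsIIDWithPMF P C p := ⟨hC, hindep, hdist⟩
  have hb : (0 : ℤ) ≤ b := Int.natCast_nonneg b
  have hq := h.passage_lt_one hnn hv1 hdeg b
  have hq' : (passage (discountedPMF v p) b (b + 1)).toReal < 1 := by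
    simpa using (ENNReal.toReal_lt_toReal (hq.trans ENNReal.one_lt_top).ne
      ENNReal.one_ne_top).2 hq
  have hWb := h.W_eq_passage_mul_W hv0 hv1 hp0 hb (le_add_of_nonneg_right zero_le_one)
  have hWb1 := h.W_pos hv0 hv1 hp0 (show (0 : ℤ) ≤ b + 1 by omega)
  refine ⟨by rw [hWb]; nlinarith, ?_⟩
  rw [h.integral_discounted_dividends hv0.le hv1 hx hq]
  rcases lt_or_ge x 0 with hx0 | hx0
  · simp [W, hx0.not_ge, passage_eq_zero_of_neg _ hx0 (by omega : x ≠ b + 1)]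
  · rw [h.W_eq_passage_mul_W hv0 hv1 hp0 hx0 (by omega : x ≤ b + 1), hWb]
    have : 1 - (passage (discountedPMF v p) b (b + 1)).toReal ≠ 0 := by linarith
    field_simp

/-- Value of the barrier dividend policy: `W_v` is strictly increasing at the barrier and
the expected discounted dividends until ruin equal `W_v(x)/(W_v(b+1) - W_v(b))` for `x ≤ b`. -/
theorem deFinetti_barrier_value
    (P : Measure Ω) [IsProbabilityMeasure P]
    (C : ℕ → Ω → ℕ) (p : ℕ → ℝ)
    (hC : ∀ i, Measurable (C i))
    (hindep : ProbabilityTheory.iIndepFun C P)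
    (hdist : ∀ i k, P {ω | C i ω = k} = ENNReal.ofReal (p k))
    (hnn : ∀ k, 0 ≤ p k) (hsum : ∑' k, p k = 1) (hp0 : 0 < p 0)
    (v : ℝ) (hv : v ∈ Set.Ioc (0 : ℝ) 1) (hdeg : min (p 0 + p 1) v < 1)
    (b : ℕ) (x : ℤ) (hx : x ≤ (b : ℤ)) :
    W P C v (p 0) b < W P C v (p 0) ((b : ℤ) + 1) ∧
    ∫ ω, (∑' i : ℕ, if (i : ℕ∞) < Truin C x b ω then v ^ i * (rdiv C x b i ω : ℝ) else 0) ∂P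
      = W P C v (p 0) x / (W P C v (p 0) ((b : ℤ) + 1) - W P C v (p 0) b) :=
  deFinetti_barrier_value_general P C p hC hindep hdist hnn hp0 v hv hdeg b x hx

end RW
end
end
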